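/- For every γ = (γ₁,γ₂,γ₃,0) ∈ ℤ⁴ with last coordinate zero, there exist constants X₁, X₂ ∈ ℂ and parameter vectors γ¹, γ² ∈ ℤ⁴ such that z₃·F_γ = X₁·F_{γ¹} + X₂·(z₁z₄ − z₂z₃)·F_{γ²} as polynomials in ℂ[z₁,z₂,z₃,z₄]. -/

import Mathlib

open MvPolynomial Finset

/-!
Write `F_γ = ∑ₙ c(γ + n b)` with `b = (1, -1, -1, 1)` and `c(v) = z^v / v!`, taking `c(v) = 0` as
soon as some `vᵢ < 0` (indices are 1-based here, so `e₃` is `Pi.single 2 1`). With this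
convention multiplication by `zᵢ` acts termwise with no side conditions,
`zᵢ c(v) = (vᵢ + 1) c(v + eᵢ)`. Hence, after the shift `n ↦ n + 1` in the `z₁z₄` part, `z₃ F_γ`,
`F_{γ+e₃}` and `(z₁z₄ - z₂z₃) F_{γ-e₂}` are sums `∑ₙ p(n) c(wₙ)` over the same
`wₙ = γ + e₃ + n b = (γ₁ + n, γ₂ - n, γ₃ + 1 - n, γ₄ + n)`, with weights `p(n)` equal to
`γ₃ + 1 - n`, `1` and `(γ₁ + n)(γ₄ + n) - (γ₂ - n)(γ₃ + 1 - n) = n S + γ₁γ₄ - γ₂(γ₃ + 1)`, where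
`S = γ₁ + γ₂ + γ₃ + γ₄ + 1`. For `S ≠ 0` the first weight is thus an affine combination of the
other two. For `S = 0` no `n` makes all entries of `γ + n b` nonnegative, so `F_γ = 0`.
-/

/-- The hypergeometric Γ-series `F_γ` for the lattice `B = ℤ⟨(1,-1,-1,1)⟩`,
as a polynomial in `ℂ[z₁,z₂,z₃,z₄]`. -/
noncomputable def GammaSeries (γ : Fin 4 → ℤ) : MvPolynomial (Fin 4) ℂ :=
  ∑ n ∈ Finset.Icc (max (-γ 0) (-γ 3)) (min (γ 1) (γ 2)),
    MvPolynomial.C ((((γ 0 + n).toNat.factorial * (γ 1 - n).toNat.factorial *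
        (γ 2 - n).toNat.factorial * (γ 3 + n).toNat.factorial : ℕ) : ℂ))⁻¹ *
      (X 0 ^ (γ 0 + n).toNat * X 1 ^ (γ 1 - n).toNat *
        X 2 ^ (γ 2 - n).toNat * X 3 ^ (γ 3 + n).toNat)

noncomputable def invFactorial (k : ℤ) : ℂ :=
  if 0 ≤ k then (k.toNat.factorial : ℂ)⁻¹ else 0

theorem invFactorial_of_nonneg {k : ℤ} (hk : 0 ≤ k) :
    invFactorial k = (k.toNat.factorial : ℂ)⁻¹ :=
  if_pos hk

theorem invFactorial_of_neg {k : ℤ} (hk : k < 0) : invFactorial k = 0 :=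
  if_neg hk.not_ge

theorem invFactorial_eq_mul_invFactorial_add_one (k : ℤ) :
    invFactorial k = (k + 1) * invFactorial (k + 1) := by
  rcases le_or_gt 0 k with hk | hk
  · lift k to ℕ using hk
    rw [show (k : ℤ) + 1 = ((k + 1 : ℕ) : ℤ) by push_cast; rfl,
      invFactorial_of_nonneg (by positivity), invFactorial_of_nonneg (by positivity),
      Int.toNat_natCast, Int.toNat_natCast, Nat.factorial_succ]
    push_cast
    field_simp
  · rcases (show k = -1 ∨ k + 1 < 0 by omega) with rfl | hk'
    · simp [invFactorial_of_neg hk]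
    · rw [invFactorial_of_neg hk, invFactorial_of_neg hk', mul_zero]

section GammaTerm

variable {σ : Type*} [Fintype σ]

noncomputable def gammaTerm (v : σ → ℤ) : MvPolynomial σ ℂ :=
  C (∏ i, invFactorial (v i)) * ∏ i, X i ^ (v i).toNat

theorem nonneg_of_prod_invFactorial_ne_zero {v : σ → ℤ} (h : ∏ j, invFactorial (v j) ≠ 0)
    (i : σ) : 0 ≤ v i := by
  by_contra! hi
  exact h (prod_eq_zero (mem_univ i) (invFactorial_of_neg hi))

theorem nonneg_of_gammaTerm_ne_zero {v : σ → ℤ} (h : gammaTerm v ≠ 0) (i : σ) : 0 ≤ v i :=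
  nonneg_of_prod_invFactorial_ne_zero (fun hp => h (by rw [gammaTerm, hp, C_0, zero_mul])) i

theorem prod_add_single_apply [DecidableEq σ] {M : Type*} [CommMonoid M] (f : σ → ℤ → M)
    (v : σ → ℤ) (i : σ) (k : ℤ) :
    ∏ j, f j ((v + Pi.single i k : σ → ℤ) j) = f i (v i + k) * ∏ j ∈ {i}ᶜ, f j (v j) := by
  rw [Fintype.prod_eq_mul_prod_compl i]
  congr 1
  · simp
  · refine prod_congr rfl fun j hj => ?_
    rw [Pi.add_apply, Pi.single_eq_of_ne (by simpa using hj), add_zero]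

theorem X_mul_gammaTerm [DecidableEq σ] (v : σ → ℤ) (i : σ) :
    X i * gammaTerm v = C ((v i + 1 : ℤ) : ℂ) * gammaTerm (v + Pi.single i 1) := by
  have hcoeff : ∏ j, invFactorial (v j) =
      ((v i + 1 : ℤ) : ℂ) * ∏ j, invFactorial ((v + Pi.single i 1 : σ → ℤ) j) := by
    rw [Fintype.prod_eq_mul_prod_compl i, prod_add_single_apply (fun _ => invFactorial),
      invFactorial_eq_mul_invFactorial_add_one, Int.cast_add, Int.cast_one, mul_assoc]
  rw [gammaTerm, gammaTerm, ← mul_assoc (C _), ← C_mul, ← hcoeff, mul_left_comm]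
  by_cases hp : ∏ j, invFactorial (v j) = 0
  · rw [hp, C_0, zero_mul, zero_mul]
  · have hi := nonneg_of_prod_invFactorial_ne_zero hp i
    rw [Fintype.prod_eq_mul_prod_compl i (fun j => X j ^ (v j).toNat),
      prod_add_single_apply (fun j k => X j ^ k.toNat), Int.toNat_add hi zero_le_one,
      Int.toNat_one, pow_succ]
    ring

end GammaTerm

def latticeGen : Fin 4 → ℤ := ![1, -1, -1, 1]

noncomputable def gammaSum (c : ℤ → ℂ) (v : Fin 4 → ℤ) : MvPolynomial (Fin 4) ℂ :=
  ∑ᶠ n : ℤ, C (c n) * gammaTerm (v + n • latticeGen)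

theorem support_gammaTerm_subset (v : Fin 4 → ℤ) :
    Function.support (fun n : ℤ => gammaTerm (v + n • latticeGen)) ⊆
      Set.Icc (max (-v 0) (-v 3)) (min (v 1) (v 2)) := by
  intro n hn
  have h := nonneg_of_gammaTerm_ne_zero hn
  have h0 := h 0; have h1 := h 1; have h2 := h 2; have h3 := h 3
  simp [latticeGen] at h0 h1 h2 h3
  simp only [Set.mem_Icc, max_le_iff, le_min_iff]
  omega

theorem hasFiniteSupport_gammaSum_summand (c : ℤ → ℂ) (v : Fin 4 → ℤ) :
    Function.HasFiniteSupport (fun n : ℤ => C (c n) * gammaTerm (v + n • latticeGen)) :=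
  (Set.finite_Icc _ _).subset
    ((Function.support_mul_subset_right _ _).trans (support_gammaTerm_subset v))

theorem gammaSeries_eq_gammaSum (γ : Fin 4 → ℤ) : GammaSeries γ = gammaSum 1 γ := by
  rw [gammaSum,
    finsum_eq_sum_of_support_subset _ (s := Icc (max (-γ 0) (-γ 3)) (min (γ 1) (γ 2)))]
  · refine sum_congr rfl fun n hn => ?_
    rw [mem_Icc, max_le_iff, le_min_iff] at hn
    simp only [gammaTerm, latticeGen, Fin.prod_univ_four, Pi.add_apply, Pi.smul_apply,
      smul_eq_mul, Pi.one_apply, map_one, one_mul]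
    simp only [Matrix.cons_val, mul_one, mul_neg, ← sub_eq_add_neg]
    rw [invFactorial_of_nonneg (by omega), invFactorial_of_nonneg (by omega),
      invFactorial_of_nonneg (by omega), invFactorial_of_nonneg (by omega)]
    simp only [Nat.cast_mul, mul_inv]
  · rw [coe_Icc]
    exact (Function.support_mul_subset_right _ _).trans (support_gammaTerm_subset γ)

theorem X_mul_gammaSum (i : Fin 4) (c : ℤ → ℂ) (v : Fin 4 → ℤ) :
    X i * gammaSum c v =
      gammaSum (fun n => c n * ((v + n • latticeGen) i + 1 : ℤ)) (v + Pi.single i 1) := by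
  rw [gammaSum, gammaSum, mul_finsum]
  refine finsum_congr fun n => ?_
  rw [mul_left_comm, X_mul_gammaTerm, add_right_comm, map_mul, mul_assoc]

theorem C_mul_gammaSum (a : ℂ) (c : ℤ → ℂ) (v : Fin 4 → ℤ) :
    C a * gammaSum c v = gammaSum (fun n => a * c n) v := by
  rw [gammaSum, gammaSum, mul_finsum]
  exact finsum_congr fun n => by rw [map_mul, mul_assoc]

theorem gammaSum_add (c d : ℤ → ℂ) (v : Fin 4 → ℤ) :
    gammaSum c v + gammaSum d v = gammaSum (c + d) v := by
  rw [gammaSum, gammaSum, gammaSum, ← finsum_add_distrib (hasFiniteSupport_gammaSum_summand c v)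
    (hasFiniteSupport_gammaSum_summand d v)]
  exact finsum_congr fun n => by rw [Pi.add_apply, map_add, add_mul]

theorem gammaSum_sub (c d : ℤ → ℂ) (v : Fin 4 → ℤ) :
    gammaSum c v - gammaSum d v = gammaSum (c - d) v := by
  rw [gammaSum, gammaSum, gammaSum, ← finsum_sub_distrib (hasFiniteSupport_gammaSum_summand c v)
    (hasFiniteSupport_gammaSum_summand d v)]
  exact finsum_congr fun n => by rw [Pi.sub_apply, map_sub, sub_mul]

theorem gammaSum_add_latticeGen (c : ℤ → ℂ) (v : Fin 4 → ℤ) :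
    gammaSum c (v + latticeGen) = gammaSum (fun n => c (n - 1)) v := by
  rw [gammaSum, gammaSum, ← finsum_comp_equiv (Equiv.subRight 1)]
  refine finsum_congr fun n => ?_
  rw [Equiv.subRight_apply, sub_smul, one_smul, add_add_sub_cancel]

theorem X_two_mul_gammaSeries (γ : Fin 4 → ℤ) (hS : γ 0 + γ 1 + γ 2 + γ 3 + 1 ≠ 0) :
    X 2 * GammaSeries γ =
      C ((((γ 2 + 1) * (γ 0 + γ 2 + γ 3 + 1) + γ 0 * γ 3 : ℤ) : ℂ) /
          ((γ 0 + γ 1 + γ 2 + γ 3 + 1 : ℤ) : ℂ)) * GammaSeries (γ + Pi.single 2 1) +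
        C (-1 / ((γ 0 + γ 1 + γ 2 + γ 3 + 1 : ℤ) : ℂ)) *
          ((X 0 * X 3 - X 1 * X 2) * GammaSeries (γ - Pi.single 1 1)) := by
  have h03 : γ - Pi.single 1 1 + Pi.single 3 1 + Pi.single 0 1 =
      γ + Pi.single 2 1 + latticeGen := by
    ext j; fin_cases j <;> simp [latticeGen]; ring
  have h12 : γ - Pi.single 1 1 + Pi.single 2 1 + Pi.single 1 1 = γ + Pi.single 2 1 := by
    abel
  have hS' : (γ 0 + γ 1 + γ 2 + γ 3 + 1 : ℂ) ≠ 0 := by exact_mod_cast hS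
  simp only [gammaSeries_eq_gammaSum, sub_mul, mul_assoc, X_mul_gammaSum, h03, h12,
    gammaSum_add_latticeGen, gammaSum_sub, C_mul_gammaSum, gammaSum_add]
  congr 1
  funext n
  simp [latticeGen]
  field_simp
  ring

theorem gammaSeries_eq_zero {γ : Fin 4 → ℤ} (h : γ 0 + γ 1 + γ 2 + γ 3 < 0) :
    GammaSeries γ = 0 := by
  rw [GammaSeries, Icc_eq_empty (by omega), sum_empty]

theorem gammaSeries_mul_var_general (γ : Fin 4 → ℤ) :
    ∃ (X₁ X₂ : ℂ) (δ₁ δ₂ : Fin 4 → ℤ),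
      (X 2) * GammaSeries γ =
        C X₁ * GammaSeries δ₁ +
          C X₂ * ((X 0 * X 3 - X 1 * X 2) * GammaSeries δ₂) := by
  by_cases hS : γ 0 + γ 1 + γ 2 + γ 3 + 1 = 0
  · exact ⟨0, 0, γ, γ, by simp [gammaSeries_eq_zero (by omega : γ 0 + γ 1 + γ 2 + γ 3 < 0)]⟩
  · exact ⟨_, _, _, _, X_two_mul_gammaSeries γ hS⟩

/-- Multiplication of `F_γ` by `X 2` is a combination
`X₁ F_{γ¹} + X₂ (z₁z₄ − z₂z₃) F_{γ²}`. -/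
theorem gammaSeries_mul_var (γ : Fin 4 → ℤ) (hγ : γ 3 = 0) :
    ∃ (X₁ X₂ : ℂ) (δ₁ δ₂ : Fin 4 → ℤ),
      (X 2) * GammaSeries γ =
        C X₁ * GammaSeries δ₁ +
          C X₂ * ((X 0 * X 3 - X 1 * X 2) * GammaSeries δ₂) :=
  gammaSeries_mul_var_general γ
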